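/- Fix t ≤ b, block length 2^{b−1}, and define I_b^t by flagging, within each block, the positions of the first 2^t and last 2^t distinct values of the block (i.e., the leftmost occurrences of the first 2^t distinct elements reading left-to-right, and symmetrically right-to-left). Then for any range [i..j] with j−i+1 > 2^{b−1} and ⌈1/τ⌉ ≤ 2^t: the positions flagged in I_b^t[i..j] contain a τ-minority of S[i..j], if one exists. -/

import Mathlib

/-- Number of occurrences of `a` in `S[i..j]`. -/
def occCount {A : Type*} [DecidableEq A] (S : ℕ → A) (a : A) (i j : ℕ) : ℕ :=
  ((Finset.Icc i j).filter (fun k => S k = a)).card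

/-- The flag `I_b^t[k] = 1`: within its block of length `2^(b-1)` (clipped to `[1..n]`),
position `k` is the leftmost occurrence of one of the first `2^t` distinct values of the
block (reading left-to-right), or the rightmost occurrence of one of the last `2^t`
distinct values of the block (reading right-to-left). -/
def Iflag {A : Type*} [DecidableEq A] (n : ℕ) (S : ℕ → A) (b t : ℕ) (k : ℕ) : Prop :=
  let lo := ((k - 1) / 2 ^ (b - 1)) * 2 ^ (b - 1) + 1
  let hi := min (lo + 2 ^ (b - 1) - 1) n
  ((∀ k' ∈ Finset.Icc lo (k - 1), S k' ≠ S k) ∧ ((Finset.Icc lo k).image S).card ≤ 2 ^ t) ∨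
  ((∀ k' ∈ Finset.Icc (k + 1) hi, S k' ≠ S k) ∧ ((Finset.Icc k hi).image S).card ≤ 2 ^ t)

/-!
The minority `a` occurs at some `p ∈ [i, j]`. Since `[i, j]` is longer than a block, it contains
either the part of `p`'s block from `max i lo` to the block end, or the part from the block start
`lo` to `j`. On such a window, the flagged positions (last occurrences, resp. first occurrences,
counted from the block boundary) carry `min (2^t) D` distinct values, `D` being the number of
distinct values of the window. So either they include an occurrence of `a` (when `D ≤ 2^t`), or
they carry `2^t ≥ 1/τ` distinct values, whose counts in `S[i..j]` cannot all exceed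
`τ (j - i + 1)` because they sum to at most `j - i + 1`.
-/

open Finset

theorem Finset.mem_or_le_card_of_min_card_le {α : Type*} {s t : Finset α} {a : α} {d : ℕ}
    (hts : t ⊆ s) (h : min d #s ≤ #t) (ha : a ∈ s) : a ∈ t ∨ d ≤ #t := by
  by_cases hd : d ≤ #s
  · exact Or.inr (by rwa [min_eq_left hd] at h)
  · rw [min_eq_right (le_of_not_ge hd)] at h
    exact Or.inl (eq_of_subset_of_card_le hts h ▸ ha)

section Occurrences
variable {ι α : Type*} [LinearOrder ι] [DecidableEq α]

def firstOccurrences (f : ι → α) (d : ℕ) (W : Finset ι) : Finset ι :=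
  {k ∈ W | (∀ k' ∈ W, k' < k → f k' ≠ f k) ∧ #({k' ∈ W | k' ≤ k}.image f) ≤ d}

def lastOccurrences (f : ι → α) (d : ℕ) (W : Finset ι) : Finset ι :=
  {k ∈ W | (∀ k' ∈ W, k < k' → f k' ≠ f k) ∧ #({k' ∈ W | k ≤ k'}.image f) ≤ d}

variable {f : ι → α} {d : ℕ} {W : Finset ι} {m : ι}

theorem firstOccurrences_subset_insert_of_forall_lt (hm : ∀ x ∈ W, x < m) :
    firstOccurrences f d W ⊆ firstOccurrences f d (insert m W) := by
  intro k hk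
  simp only [firstOccurrences, mem_filter] at hk ⊢
  obtain ⟨hkW, hfirst, hcard⟩ := hk
  have hkm := hm k hkW
  have hprefix : {k' ∈ insert m W | k' ≤ k} = {k' ∈ W | k' ≤ k} := by
    rw [filter_insert, if_neg (not_le.2 hkm)]
  refine ⟨mem_insert_of_mem hkW, fun k' hk' hlt => ?_, hprefix ▸ hcard⟩
  rcases mem_insert.1 hk' with rfl | hk'
  · exact absurd hkm (not_lt.2 hlt.le)
  · exact hfirst k' hk' hlt

theorem mem_firstOccurrences_insert_of_forall_lt (hm : ∀ x ∈ W, x < m)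
    (hfm : f m ∉ W.image f) (hd : #(W.image f) < d) :
    m ∈ firstOccurrences f d (insert m W) := by
  have hprefix : {k' ∈ insert m W | k' ≤ m} = insert m W :=
    filter_true_of_mem fun x hx => (mem_insert.1 hx).elim le_of_eq fun h => (hm x h).le
  simp only [firstOccurrences, mem_filter, hprefix, image_insert, card_insert_of_notMem hfm]
  refine ⟨mem_insert_self m W, fun k' hk' hlt => ?_, hd⟩
  rcases mem_insert.1 hk' with rfl | hk'
  · exact absurd hlt (lt_irrefl _)
  · exact fun h => hfm (h ▸ mem_image_of_mem f hk')

theorem min_le_card_image_firstOccurrences (f : ι → α) (d : ℕ) (W : Finset ι) :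
    min d #(W.image f) ≤ #((firstOccurrences f d W).image f) := by
  induction W using Finset.induction_on_max with
  | empty => simp
  | insert m W hm ih =>
    have hmono := card_le_card (image_subset_image (f := f)
      (firstOccurrences_subset_insert_of_forall_lt (f := f) (d := d) hm))
    rw [image_insert]
    by_cases hfm : f m ∈ W.image f
    · rw [insert_eq_of_mem hfm]
      exact ih.trans hmono
    by_cases hd : #(W.image f) < d
    · have hnew := mem_firstOccurrences_insert_of_forall_lt hm hfm hd
      have hsub : insert m (firstOccurrences f d W) ⊆ firstOccurrences f d (insert m W) :=
        insert_subset hnew (firstOccurrences_subset_insert_of_forall_lt hm)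
      have hfm' : f m ∉ (firstOccurrences f d W).image f :=
        fun h => hfm (image_subset_image (filter_subset _ _) h)
      have := card_le_card (image_subset_image (f := f) hsub)
      rw [image_insert, card_insert_of_notMem hfm'] at this
      rw [card_insert_of_notMem hfm]
      omega
    · rw [card_insert_of_notMem hfm]
      omega

theorem min_le_card_image_lastOccurrences (f : ι → α) (d : ℕ) (W : Finset ι) :
    min d #(W.image f) ≤ #((lastOccurrences f d W).image f) :=
  -- `lastOccurrences` is `firstOccurrences` for the reversed order, definitionally
  min_le_card_image_firstOccurrences (ι := ιᵒᵈ) f d W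

theorem mem_image_firstOccurrences_or_le_card {a : α} (ha : a ∈ W.image f) :
    a ∈ (firstOccurrences f d W).image f ∨ d ≤ #((firstOccurrences f d W).image f) :=
  mem_or_le_card_of_min_card_le (image_subset_image (filter_subset _ _))
    (min_le_card_image_firstOccurrences f d W) ha

theorem mem_image_lastOccurrences_or_le_card {a : α} (ha : a ∈ W.image f) :
    a ∈ (lastOccurrences f d W).image f ∨ d ≤ #((lastOccurrences f d W).image f) :=
  mem_or_le_card_of_min_card_le (image_subset_image (filter_subset _ _))
    (min_le_card_image_lastOccurrences f d W) ha

end Occurrences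

section Counting
variable {A : Type*} [DecidableEq A] (S : ℕ → A) (i j : ℕ)

theorem sum_occCount_le (V : Finset A) : ∑ c ∈ V, occCount S c i j ≤ j - i + 1 := by
  unfold occCount
  rw [sum_card_fiberwise_eq_card_filter]
  exact (card_filter_le _ _).trans (by simp; omega)

theorem exists_occCount_le_of_inv_le_card {τ : ℝ} (hτ : 0 < τ) {V : Finset A}
    (hV : 1 / τ ≤ #V) :
    ∃ c ∈ V, (occCount S c i j : ℝ) ≤ τ * ((j - i + 1 : ℕ) : ℝ) := by
  by_contra! h
  have hne : V.Nonempty := card_pos.1 (by exact_mod_cast (one_div_pos.2 hτ).trans_le hV)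
  have hlt := sum_lt_sum_of_nonempty hne h
  rw [sum_const, nsmul_eq_mul] at hlt
  have hsum : ∑ c ∈ V, (occCount S c i j : ℝ) ≤ ((j - i + 1 : ℕ) : ℝ) := by
    exact_mod_cast sum_occCount_le S i j V
  have hτV : 1 ≤ #V * τ := by rwa [div_le_iff₀ hτ] at hV
  nlinarith

theorem exists_occCount_le_of_mem_or_le_card {τ : ℝ} (hτ : 0 < τ) {d : ℕ} (hd : 1 / τ ≤ d)
    {F : Finset ℕ} {a : A} (ha : (occCount S a i j : ℝ) ≤ τ * ((j - i + 1 : ℕ) : ℝ))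
    (hF : a ∈ F.image S ∨ d ≤ #(F.image S)) :
    ∃ k ∈ F, (occCount S (S k) i j : ℝ) ≤ τ * ((j - i + 1 : ℕ) : ℝ) := by
  rcases hF with haF | hcard
  · obtain ⟨k, hk, rfl⟩ := mem_image.1 haF
    exact ⟨k, hk, ha⟩
  · obtain ⟨c, hcF, hc⟩ :=
      exists_occCount_le_of_inv_le_card S i j hτ (hd.trans (by exact_mod_cast hcard))
    obtain ⟨k, hk, rfl⟩ := mem_image.1 hcF
    exact ⟨k, hk, hc⟩

end Counting

section Blocks

def blockStart (b k : ℕ) : ℕ := (k - 1) / 2 ^ (b - 1) * 2 ^ (b - 1) + 1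

def blockEnd (n b k : ℕ) : ℕ := min (blockStart b k + 2 ^ (b - 1) - 1) n

theorem blockStart_le (b : ℕ) {k : ℕ} (hk : 1 ≤ k) : blockStart b k ≤ k := by
  have := Nat.div_mul_le_self (k - 1) (2 ^ (b - 1))
  unfold blockStart; omega

theorem lt_blockStart_add (b k : ℕ) : k < blockStart b k + 2 ^ (b - 1) := by
  have := Nat.lt_div_mul_add (a := k - 1) (Nat.two_pow_pos (b - 1))
  unfold blockStart; omega

theorem blockStart_eq_of_le_of_lt {b p k : ℕ} (h1 : blockStart b p ≤ k)
    (h2 : k < blockStart b p + 2 ^ (b - 1)) : blockStart b k = blockStart b p := by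
  unfold blockStart at *
  rw [Nat.div_eq_of_lt_le (k := (p - 1) / 2 ^ (b - 1)) (by omega) (by rw [Nat.succ_mul]; omega)]

theorem blockEnd_eq_of_le_of_lt {n b p k : ℕ} (h1 : blockStart b p ≤ k)
    (h2 : k < blockStart b p + 2 ^ (b - 1)) : blockEnd n b k = blockEnd n b p := by
  rw [blockEnd, blockEnd, blockStart_eq_of_le_of_lt h1 h2]

variable {A : Type*} [DecidableEq A] {n : ℕ} {S : ℕ → A} {b t k : ℕ}

theorem Iflag_iff : Iflag n S b t k ↔
    ((∀ k' ∈ Icc (blockStart b k) (k - 1), S k' ≠ S k) ∧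
      #((Icc (blockStart b k) k).image S) ≤ 2 ^ t) ∨
    ((∀ k' ∈ Icc (k + 1) (blockEnd n b k), S k' ≠ S k) ∧
      #((Icc k (blockEnd n b k)).image S) ≤ 2 ^ t) :=
  Iff.rfl

theorem Iflag_of_mem_firstOccurrences {lo j' : ℕ} (hlo : blockStart b k = lo)
    (hk : k ∈ firstOccurrences S (2 ^ t) (Icc lo j')) : Iflag n S b t k := by
  have hlo1 : 1 ≤ lo := hlo ▸ Nat.le_add_left 1 _
  simp only [firstOccurrences, mem_filter, mem_Icc] at hk
  obtain ⟨⟨hlok, hkj⟩, hfirst, hcard⟩ := hk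
  have hprefix : {k' ∈ Icc lo j' | k' ≤ k} = Icc lo k := by
    ext x; simp only [mem_filter, mem_Icc]; omega
  rw [Iflag_iff, hlo, ← hprefix]
  refine Or.inl ⟨fun k' hk' => ?_, hcard⟩
  rw [mem_Icc] at hk'
  exact hfirst k' ⟨hk'.1, by omega⟩ (by omega)

theorem Iflag_of_mem_lastOccurrences {i' hi : ℕ} (hhi : blockEnd n b k = hi)
    (hk : k ∈ lastOccurrences S (2 ^ t) (Icc i' hi)) : Iflag n S b t k := by
  simp only [lastOccurrences, mem_filter, mem_Icc] at hk
  obtain ⟨⟨hik, hkh⟩, hlast, hcard⟩ := hk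
  have hsuffix : {k' ∈ Icc i' hi | k ≤ k'} = Icc k hi := by
    ext x; simp only [mem_filter, mem_Icc]; omega
  rw [Iflag_iff, hhi, ← hsuffix]
  refine Or.inr ⟨fun k' hk' => ?_, hcard⟩
  rw [mem_Icc] at hk'
  exact hlast k' ⟨by omega, hk'.2⟩ (by omega)

end Blocks

theorem Iflag_contains_minority_general {A : Type*} [DecidableEq A]
    (n : ℕ) (S : ℕ → A) (τ : ℝ) (hτ0 : 0 < τ)
    (i j : ℕ) (h1i : 1 ≤ i) (hjn : j ≤ n)
    (b t : ℕ)
    (hlen : 2 ^ (b - 1) < j - i + 1)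
    (ht : 1 / τ ≤ (2 : ℝ) ^ t)
    (hex : ∃ a, 1 ≤ occCount S a i j ∧
      (occCount S a i j : ℝ) ≤ τ * ((j - i + 1 : ℕ) : ℝ)) :
    ∃ k ∈ Finset.Icc i j, Iflag n S b t k ∧
      (occCount S (S k) i j : ℝ) ≤ τ * ((j - i + 1 : ℕ) : ℝ) := by
  obtain ⟨a, ha1, ha2⟩ := hex
  obtain ⟨p, hp⟩ := card_pos.1 ha1
  rw [mem_filter, mem_Icc] at hp
  obtain ⟨hp, rfl⟩ := hp
  suffices ∃ F ⊆ Icc i j, (∀ k ∈ F, Iflag n S b t k) ∧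
      (S p ∈ F.image S ∨ 2 ^ t ≤ #(F.image S)) by
    obtain ⟨F, hFij, hF, hpF⟩ := this
    obtain ⟨k, hk, hkmin⟩ := exists_occCount_le_of_mem_or_le_card S i j hτ0
      (by exact_mod_cast ht) ha2 hpF
    exact ⟨k, hFij hk, hF k hk, hkmin⟩
  have hlop := blockStart_le b (h1i.trans hp.1)
  have hplo := lt_blockStart_add b p
  by_cases hcase : blockEnd n b p ≤ j
  · refine ⟨lastOccurrences S (2 ^ t) (Icc (max i (blockStart b p)) (blockEnd n b p)),
      (filter_subset _ _).trans fun x => ?_, fun k hk => Iflag_of_mem_lastOccurrences ?_ hk,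
      mem_image_lastOccurrences_or_le_card (mem_image_of_mem S ?_)⟩
    · simp only [mem_Icc]; omega
    · have hkW := mem_Icc.1 (filter_subset _ _ hk)
      exact blockEnd_eq_of_le_of_lt (by omega) (by simp only [blockEnd] at hkW; omega)
    · simp only [mem_Icc, blockEnd]; omega
  · rw [blockEnd, not_le] at hcase
    refine ⟨firstOccurrences S (2 ^ t) (Icc (blockStart b p) j),
      (filter_subset _ _).trans fun x => ?_, fun k hk => Iflag_of_mem_firstOccurrences ?_ hk,
      mem_image_firstOccurrences_or_le_card (mem_image_of_mem S (mem_Icc.2 ⟨hlop, hp.2⟩))⟩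
    · simp only [mem_Icc]; omega
    · have hkW := mem_Icc.1 (filter_subset _ _ hk)
      exact blockStart_eq_of_le_of_lt hkW.1 (by omega)

/-- For `b = ⌊log₂(j-i+1)⌋ ≥ t = ⌈log₂(1/τ)⌉` (so `j-i+1 > 2^(b-1)` and
`⌈1/τ⌉ ≤ 2^t`), the positions flagged in `I_b^t[i..j]` contain a `τ`-minority of
`S[i..j]`, if one exists. -/
theorem Iflag_contains_minority {A : Type*} [DecidableEq A]
    (n : ℕ) (S : ℕ → A) (τ : ℝ) (hτ0 : 0 < τ) (hτ1 : τ ≤ 1)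
    (i j : ℕ) (h1i : 1 ≤ i) (hij : i ≤ j) (hjn : j ≤ n)
    (b t : ℕ) (htb : t ≤ b)
    (hlen : 2 ^ (b - 1) < j - i + 1)
    (ht : 1 / τ ≤ (2 : ℝ) ^ t)
    (hex : ∃ a, 1 ≤ occCount S a i j ∧
      (occCount S a i j : ℝ) ≤ τ * ((j - i + 1 : ℕ) : ℝ)) :
    ∃ k ∈ Finset.Icc i j, Iflag n S b t k ∧
      (occCount S (S k) i j : ℝ) ≤ τ * ((j - i + 1 : ℕ) : ℝ) :=
  Iflag_contains_minority_general n S τ hτ0 i j h1i hjn b t hlen ht hex
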